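/- Let H be a Hopf algebra and V a vector space, with 𝒜 = 𝒜(H,V) the algebra freely generated by H and V. The H-submodule H·V of 𝒜 generated by V (under the adjoint action) is naturally isomorphic, as an H-module, to the free H-module H ⊗ V on V. -/

import Mathlib

open TensorProduct LinearMap

/-- The adjoint action of a Hopf algebra `H` on an algebra `𝒜` containing it (via `ι`):
`h · a = ∑ᵢ h₁ᵢ a S(h₂ᵢ)`, packaged as a bilinear map. -/
noncomputable def adjAct {F H C : Type*} [Field F] [Ring H]
    [HopfAlgebra F H] [Ring C] [Algebra F C] (ι : H →ₐ[F] C) : H →ₗ[F] C →ₗ[F] C :=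
  (TensorProduct.lift ((LinearMap.llcomp F C C C).compl₁₂
      ((LinearMap.mul F C).comp ι.toLinearMap)
      (((LinearMap.mul F C).flip).comp
        (ι.toLinearMap ∘ₗ (HopfAlgebra.antipode (R := F) (A := H)))))) ∘ₗ
    Coalgebra.comul

/-- The linear map `H ⊗ V → 𝒜`, `h ⊗ v ↦ h · v` (adjoint action applied to `V ⊆ 𝒜`). -/
noncomputable def actOnV {F : Type*} {H V 𝒜 : Type*} [Field F] [Ring H] [HopfAlgebra F H]
    [AddCommGroup V] [Module F V] [Ring 𝒜] [Algebra F 𝒜]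
    (ιH : H →ₐ[F] 𝒜) (ιV : V →ₗ[F] 𝒜) : H ⊗[F] V →ₗ[F] 𝒜 :=
  TensorProduct.lift (((LinearMap.llcomp F V 𝒜 𝒜).flip ιV) ∘ₗ adjAct ιH)

/-! `actOnV` is injective because it has a left inverse inside a representation of `𝒜`.
Let `H` act on `M = H ⊕ (H ⊗ V)` by left multiplication and let `v ∈ V` act by
`(x, y) ↦ (0, ε(x) (1 ⊗ v))`; by the universal property this is an action of `𝒜`. In it
`(h · v)(1, 0) = ∑ h₁ v S(h₂) (1, 0) = (0, ∑ ε(S h₂) h₁ ⊗ v) = (0, h ⊗ v)`,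
so the `H ⊗ V`-component of the image of `(1, 0)` recovers `h ⊗ v` from `h · v`.
Equivariance is `(h'h) · a = h' · (h · a)`, which holds because `S` is an antihomomorphism. -/

open Coalgebra HopfAlgebra

theorem Coalgebra.sum_counit_smul_left {R A ι : Type*} [CommSemiring R] [AddCommMonoid A]
    [Module R A] [Coalgebra R A] {a : A} (𝓡 : Coalgebra.Repr R a ι) :
    ∑ i ∈ 𝓡.index, counit (R := R) (𝓡.right i) • 𝓡.left i = a := by
  simpa only [map_sum, _root_.TensorProduct.rid_tmul, one_smul]
    using congr(_root_.TensorProduct.rid R A $(sum_tmul_counit_eq 𝓡))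

namespace AdjointAction

section AdjAct

variable {F H C : Type*} [Field F] [Ring H] [HopfAlgebra F H] [Ring C] [Algebra F C]

theorem adjAct_apply {κ : Type*} (ι : H →ₐ[F] C) {h : H} (𝓡 : Coalgebra.Repr F h κ) (a : C) :
    adjAct ι h a = ∑ i ∈ 𝓡.index, ι (𝓡.left i) * a * ι (antipode F (𝓡.right i)) := by
  simp [adjAct, ← 𝓡.eq, map_sum, mul_assoc]

theorem adjAct_mul_apply (ι : H →ₐ[F] C) (h' h : H) (a : C) :
    adjAct ι (h' * h) a = adjAct ι h' (adjAct ι h a) := by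
  simp only [adjAct_apply ι ((ℛ F h').mul (ℛ F h)), adjAct_apply ι (ℛ F h'),
    adjAct_apply ι (ℛ F h), Finset.sum_product, Finset.mul_sum, Finset.sum_mul,
    Coalgebra.Repr.mul_left, Coalgebra.Repr.mul_right, Coalgebra.Repr.mul_index,
    antipode_mul_antidistrib, map_mul, mul_assoc]

theorem map_adjAct {B : Type*} [Ring B] [Algebra F B] (φ : C →ₐ[F] B) (ι : H →ₐ[F] C)
    (h : H) (a : C) : φ (adjAct ι h a) = adjAct (φ.comp ι) h (φ a) := by
  simp [adjAct_apply _ (ℛ F h), map_sum]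

end AdjAct

section ActOnV

variable {F H V 𝒜 : Type*} [Field F] [Ring H] [HopfAlgebra F H] [AddCommGroup V] [Module F V]
  [Ring 𝒜] [Algebra F 𝒜] (ιH : H →ₐ[F] 𝒜) (ιV : V →ₗ[F] 𝒜)

@[simp]
theorem actOnV_tmul (h : H) (v : V) : actOnV ιH ιV (h ⊗ₜ v) = adjAct ιH h (ιV v) := by
  simp [actOnV]

theorem actOnV_mul_tmul (h' h : H) (v : V) :
    actOnV ιH ιV ((h' * h) ⊗ₜ v) = adjAct ιH h' (actOnV ιH ιV (h ⊗ₜ v)) := by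
  simp [adjAct_mul_apply]

theorem range_actOnV :
    range (actOnV ιH ιV) = Submodule.span F {x | ∃ (h : H) (v : V), x = adjAct ιH h (ιV v)} := by
  rw [range_eq_map, ← span_tmul_eq_top, Submodule.map_span]
  congr 1
  ext x
  simp [eq_comm]

end ActOnV

section Model

variable {F H V : Type*} [Field F] [Ring H] [HopfAlgebra F H] [AddCommGroup V] [Module F V]

variable (F H) in
noncomputable def counitSmulTmul : V →ₗ[F] Module.End F (H × (H ⊗[F] V)) :=
  smulRightₗ (counit ∘ₗ fst F H (H ⊗[F] V)) ∘ₗ inr F H (H ⊗[F] V) ∘ₗ TensorProduct.mk F H V 1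

theorem counitSmulTmul_apply (v : V) (x : H × (H ⊗[F] V)) :
    counitSmulTmul F H v x = (0, counit (R := F) x.1 • (1 ⊗ₜ v)) := by
  simp [counitSmulTmul]

theorem adjAct_counitSmulTmul_apply_one_zero (h : H) (v : V) :
    (adjAct (Algebra.lsmul F F (H × (H ⊗[F] V))) h (counitSmulTmul F H v) (1, 0)).2 =
      h ⊗ₜ v := by
  simp only [adjAct_apply _ (ℛ F h), LinearMap.sum_apply, Module.End.mul_apply,
    Algebra.lsmul_coe, Prod.smul_mk, counitSmulTmul_apply, smul_zero, Prod.snd_sum,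
    smul_eq_mul, mul_one, counit_antipode, smul_tmul', mul_smul_comm, ← sum_tmul,
    Coalgebra.sum_counit_smul_left]

theorem actOnV_injective_of_algHom {𝒜 : Type*} [Ring 𝒜] [Algebra F 𝒜]
    {ιH : H →ₐ[F] 𝒜} {ιV : V →ₗ[F] 𝒜} (φ : 𝒜 →ₐ[F] Module.End F (H × (H ⊗[F] V)))
    (hφH : φ.comp ιH = Algebra.lsmul F F _) (hφV : φ.toLinearMap ∘ₗ ιV = counitSmulTmul F H) :
    Function.Injective (actOnV ιH ιV) := by
  have hφV' (v : V) : φ (ιV v) = counitSmulTmul F H v := congr($hφV v)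
  refine Function.LeftInverse.injective (g := fun a ↦ (φ a (1, 0)).2) fun z ↦ ?_
  induction z using TensorProduct.induction_on with
  | zero => simp
  | tmul h v =>
    dsimp only
    rw [actOnV_tmul, map_adjAct (B := Module.End F (H × (H ⊗[F] V))), hφH, hφV', adjAct_counitSmulTmul_apply_one_zero]
  | add z₁ z₂ h₁ h₂ => simp_all

end Model

end AdjointAction

/-- in the algebra `𝒜 = 𝒜(H,V)` freely generated by a Hopf algebra `H` and a
vector space `V`, the `H`-submodule `H·V` generated by `V` under the adjoint action is
naturally isomorphic, as an `H`-module, to the free `H`-module `H ⊗ V`: the map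
`h ⊗ v ↦ h · v` is injective, `H`-equivariant, with image `H·V`. -/
theorem HV_free_module (F : Type*) (H V 𝒜 : Type u) [Field F] [Ring H] [HopfAlgebra F H]
    [AddCommGroup V] [Module F V] [Ring 𝒜] [Algebra F 𝒜]
    (ιH : H →ₐ[F] 𝒜) (ιV : V →ₗ[F] 𝒜)
    (hUP : ∀ (B : Type u) (_ : Ring B) (_ : Algebra F B) (f : H →ₐ[F] B) (g : V →ₗ[F] B),
      ∃! φ : 𝒜 →ₐ[F] B, φ.comp ιH = f ∧ φ.toLinearMap ∘ₗ ιV = g)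
    (HV : Submodule F 𝒜)
    (hHV : HV = Submodule.span F {x : 𝒜 | ∃ (h : H) (v : V), x = adjAct ιH h (ιV v)}) :
    Function.Injective (actOnV ιH ιV) ∧
    LinearMap.range (actOnV ιH ιV) = HV ∧
    (∀ (h' h : H) (v : V),
      actOnV ιH ιV ((h' * h) ⊗ₜ[F] v) = adjAct ιH h' (actOnV ιH ιV (h ⊗ₜ[F] v))) := by
  obtain ⟨φ, ⟨hφH, hφV⟩, -⟩ := hUP (Module.End F (H × (H ⊗[F] V))) inferInstance inferInstance
    (Algebra.lsmul F F _) (AdjointAction.counitSmulTmul F H)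
  exact ⟨AdjointAction.actOnV_injective_of_algHom φ hφH hφV,
    hHV ▸ AdjointAction.range_actOnV ιH ιV, AdjointAction.actOnV_mul_tmul ιH ιV⟩
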